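/- arXiv:cs/0607033 — 3 statements merged into one kernel-verified Lean document; each statement's English description precedes it below -/
import Mathlib

section
/- Let S₀(s,t) be the set of vertices lying on at least one shortest s-t path of a connected graph G. If c is a cut vertex of the induced subgraph G[S₀(s,t)] (with c ∉ {s,t}), then c lies on every shortest s-t path of G. -/
/-- The set of vertices lying on at least one shortest `s`-`t` path of `G`. -/
def shortestPathVerts {V : Type*} (G : SimpleGraph V) (s t : V) : Set V :=
  {a | ∃ p : G.Walk s t, p.IsPath ∧ p.length = G.dist s t ∧ a ∈ p.support}

/-- `c` is a cut vertex of the subgraph of `G` induced on `S`: it belongs to `S`,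
the induced subgraph is connected, and deleting `c` disconnects it. -/
def IsCutVertexOn {V : Type*} (G : SimpleGraph V) (S : Set V) (c : V) : Prop :=
  c ∈ S ∧ (G.induce S).Connected ∧ ¬ (G.induce (S \ {c})).Preconnected

/-!
If some shortest `s`-`t` path `p` avoids `c`, then `G[S₀(s,t)] - c` is connected. Indeed, any
vertex `u ≠ c` of `S₀(s,t)` lies on a shortest path `q`, and `c` cannot lie both on the segment
of `q` before `u` and on the segment after `u`; the other segment joins `u` to `s` or to `t`
inside `S₀(s,t) - c`, and `p` joins `t` to `s` there.
-/

namespace SimpleGraph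

variable {V : Type*} {G : SimpleGraph V}

theorem Walk.IsPath.exists_walk_to_endpoint_avoiding [DecidableEq V] {a b u c : V}
    {q : G.Walk a b} (hq : q.IsPath) (hu : u ∈ q.support) (hcu : c ≠ u) :
    (∃ σ : G.Walk u a, σ.support ⊆ q.support ∧ c ∉ σ.support) ∨
      (∃ σ : G.Walk u b, σ.support ⊆ q.support ∧ c ∉ σ.support) := by
  by_contra! h
  obtain ⟨hbefore, hafter⟩ := h
  have hc₁ : c ∈ (q.takeUntil u hu).support := by
    simpa using hbefore (q.takeUntil u hu).reverse
      (by simpa using q.support_takeUntil_subset_support hu)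
  have hc₂ : c ∈ (q.dropUntil u hu).support :=
    hafter (q.dropUntil u hu) (q.support_dropUntil_subset_support hu)
  rw [← q.take_spec hu] at hq
  exact hq.ne_of_mem_support_of_append hcu hc₁ hc₂ rfl

theorem preconnected_induce_shortestPathVerts_diff_of_avoiding_path {s t c : V}
    {p : G.Walk s t} (hp : p.IsPath) (hpl : p.length = G.dist s t) (hcp : c ∉ p.support) :
    (G.induce (shortestPathVerts G s t \ {c})).Preconnected := by
  classical
  set T := shortestPathVerts G s t \ {c}
  have hpT : ∀ x ∈ p.support, x ∈ T := fun x hx =>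
    ⟨⟨p, hp, hpl, hx⟩, fun h => hcp (h ▸ hx)⟩
  have hs : s ∈ T := hpT s p.start_mem_support
  suffices reach_s : ∀ (u : V) (hu : u ∈ T), (G.induce T).Reachable ⟨u, hu⟩ ⟨s, hs⟩ by
    rintro ⟨u, hu⟩ ⟨v, hv⟩
    exact (reach_s u hu).trans (reach_s v hv).symm
  rintro u ⟨⟨q, hq, hql, huq⟩, huc⟩
  have hσT {e : V} (σ : G.Walk u e) (hσq : σ.support ⊆ q.support) (hcσ : c ∉ σ.support) :
      ∀ x ∈ σ.support, x ∈ T := fun x hx =>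
    ⟨⟨q, hq, hql, hσq hx⟩, fun h => hcσ (h ▸ hx)⟩
  rcases hq.exists_walk_to_endpoint_avoiding huq (Ne.symm huc) with
    ⟨σ, hσq, hcσ⟩ | ⟨σ, hσq, hcσ⟩
  · exact (σ.induce T (hσT σ hσq hcσ)).reachable
  · exact (σ.induce T (hσT σ hσq hcσ)).reachable.trans
      (p.reverse.induce T (by simpa using hpT)).reachable

end SimpleGraph

theorem stmt_5_general {V : Type*} (G : SimpleGraph V)
    (s t : V) (c : V)
    (hc : IsCutVertexOn G (shortestPathVerts G s t) c) :
    ∀ p : G.Walk s t, p.IsPath → p.length = G.dist s t → c ∈ p.support := by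
  intro p hp hpl
  by_contra hcp
  exact hc.2.2
    (SimpleGraph.preconnected_induce_shortestPathVerts_diff_of_avoiding_path hp hpl hcp)

/-- If `c` is a cut vertex of `G[S₀(s,t)]` with `c ∉ {s,t}`, then `c` lies on every
shortest `s`-`t` path of `G`. -/
theorem stmt_5 {V : Type*} [Fintype V] (G : SimpleGraph V) (hG : G.Connected)
    (s t : V) (hst : s ≠ t) (c : V)
    (hc : IsCutVertexOn G (shortestPathVerts G s t) c) (hcs : c ≠ s) (hct : c ≠ t) :
    ∀ p : G.Walk s t, p.IsPath → p.length = G.dist s t → c ∈ p.support :=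
  stmt_5_general G s t c hc
end

section
/- Let R be a rotation system on a connected graph G of minimum degree at least 3, and let R' be another rotation system on G with the same associated layout system, L(R') = L(R). Then R' = R or R' = R*, where R* is the conjugate of R. -/
/-- A rotation system on a graph `G`: a ternary relation `T` on the vertices such that
`T a b c` implies `b, c ∈ Γ(a)`, and for every vertex `a` the binary relation
`T a` is a directed cycle on the neighborhood `Γ(a)` (every neighbor has a unique
successor and a unique predecessor, and the digraph is connected). -/
structure RotationSystem {V : Type*} (G : SimpleGraph V) where
  T : V → V → V → Prop
  mem_of : ∀ a b c : V, T a b c → b ∈ G.neighborSet a ∧ c ∈ G.neighborSet a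
  succ_exists_unique : ∀ a b : V, b ∈ G.neighborSet a → ∃! c : V, T a b c
  pred_exists_unique : ∀ a c : V, c ∈ G.neighborSet a → ∃! b : V, T a b c
  cycle_connected : ∀ a b c : V, b ∈ G.neighborSet a → c ∈ G.neighborSet a →
    Relation.ReflTransGen (fun x y => T a x y) b c

/-- The conjugate rotation system `R*`, with `T*(a,b,c) = T(a,c,b)`. -/
def RotationSystem.conj {V : Type*} {G : SimpleGraph V} (R : RotationSystem G) :
    RotationSystem G where
  T a b c := R.T a c b
  mem_of a b c h := ⟨(R.mem_of a c b h).2, (R.mem_of a c b h).1⟩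
  succ_exists_unique a b hb := R.pred_exists_unique a b hb
  pred_exists_unique a c hc := R.succ_exists_unique a c hc
  cycle_connected a b c hb hc :=
    Relation.reflTransGen_swap.mpr (R.cycle_connected a c b hc hb)

/-- The ternary relation of the layout system associated with a rotation system:
`T_L(a,b,c) = T(a,b,c) ∨ T(a,c,b)` (the undirected version of each cycle). -/
def RotationSystem.layoutT {V : Type*} {G : SimpleGraph V} (R : RotationSystem G)
    (a b c : V) : Prop :=
  R.T a b c ∨ R.T a c b

/-- The quaternary relation of the layout system associated with a rotation system.
`Q(b₁,a₁,a₂,b₂)` holds exactly for the quadruples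
`(p_{a₁}(a₂), a₁, a₂, s_{a₂}(a₁))` and `(s_{a₁}(a₂), a₁, a₂, p_{a₂}(a₁))`
with `a₁, a₂` adjacent, phrased via the relation `T` (`s_a(b) = c ↔ T a b c`). -/
def RotationSystem.layoutQ {V : Type*} {G : SimpleGraph V} (R : RotationSystem G)
    (b₁ a₁ a₂ b₂ : V) : Prop :=
  (R.T a₁ b₁ a₂ ∧ R.T a₂ a₁ b₂) ∨ (R.T a₁ a₂ b₁ ∧ R.T a₂ b₂ a₁)

/-!
At a vertex of degree at least 3 the cycle `T_a` has no 2-cycles, so a directed cycle is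
determined by its undirected version up to reversal: once `R'` and `R` agree on one arc at `a`,
following the cycle shows that `T'_a` is `T_a` or its reverse. Hence `T_L` forces, vertex by
vertex, `T'_a = T_a` or `T'_a = T*_a`. The quadruples in `Q` tie the orientations at the two ends
of an edge together: if `T'_{a₁} = T_{a₁}` then the quadruple through `p_{a₁}(a₂)` forces
`T'_{a₂}` to agree with `T_{a₂}` on an arc, hence everywhere. Connectivity spreads the choice of
orientation made at one vertex over the whole graph.
-/

namespace RotationSystem

variable {V : Type*} {G : SimpleGraph V}

lemma ext_T {R₁ R₂ : RotationSystem G} (h : R₁.T = R₂.T) : R₁ = R₂ := by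
  cases R₁; cases R₂; cases h; rfl

lemma layoutT_conj (R : RotationSystem G) : R.conj.layoutT = R.layoutT := by
  funext a b c
  exact propext or_comm

lemma layoutQ_conj (R : RotationSystem G) : R.conj.layoutQ = R.layoutQ := by
  funext b₁ a₁ a₂ b₂
  exact propext or_comm

lemma neighborSet_subset_of_T_of_T_swap (R : RotationSystem G) {a b c : V}
    (hbc : R.T a b c) (hcb : R.T a c b) : G.neighborSet a ⊆ {b, c} := by
  have hb := (R.mem_of a b c hbc).1
  intro d hd
  have hbd := R.cycle_connected a b d hb hd
  clear hd
  induction hbd with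
  | refl => exact Or.inl rfl
  | tail _ hxy ih =>
    rcases ih with rfl | rfl
    · exact Or.inr ((R.succ_exists_unique a _ hb).unique hxy hbc)
    · exact Or.inl ((R.succ_exists_unique a _ (R.mem_of a b _ hbc).2).unique hxy hcb)

lemma not_T_swap (R : RotationSystem G) {a b c : V} [Fintype (G.neighborSet a)]
    (ha : 3 ≤ G.degree a) (hbc : R.T a b c) : ¬ R.T a c b := by
  classical
  intro hcb
  have hsub : G.neighborFinset a ⊆ {b, c} := fun d hd => by
    simpa using R.neighborSet_subset_of_T_of_T_swap hbc hcb ((G.mem_neighborFinset a d).mp hd)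
  have := (Finset.card_le_card hsub).trans Finset.card_le_two
  rw [G.card_neighborFinset_eq_degree] at this
  omega

section

variable {R R' : RotationSystem G} {a : V} [Fintype (G.neighborSet a)]

lemma T_eq_of_layoutT_eq_of_T (ha : 3 ≤ G.degree a)
    (hT : ∀ b c, R'.layoutT a b c ↔ R.layoutT a b c)
    {b c : V} (hbc' : R'.T a b c) (hbc : R.T a b c) : R'.T a = R.T a := by
  have step : ∀ x y z, R.T a x y → R'.T a x y → R.T a y z → R'.T a y z := by
    intro x y z hxy hxy' hyz
    refine ((hT y z).mpr (Or.inl hyz)).resolve_right fun hzy' => ?_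
    obtain rfl : z = x :=
      (R'.pred_exists_unique a y (R.mem_of a x y hxy).2).unique hzy' hxy'
    exact R.not_T_swap ha hxy hyz
  have hin : ∀ y, y ∈ G.neighborSet a → ∃ x, R.T a x y ∧ R'.T a x y := by
    intro y hy
    have hcy := R.cycle_connected a c y (R.mem_of a b c hbc).2 hy
    clear hy
    induction hcy with
    | refl => exact ⟨b, hbc, hbc'⟩
    | tail _ hxy ih =>
      obtain ⟨w, hw, hw'⟩ := ih
      exact ⟨_, hxy, step w _ _ hw hw' hxy⟩
  have hsub : ∀ x y, R.T a x y → R'.T a x y := by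
    intro x y hxy
    obtain ⟨w, hw, hw'⟩ := hin x (R.mem_of a x y hxy).1
    exact step w x y hw hw' hxy
  funext x y
  refine propext ⟨fun hxy' => ?_, hsub x y⟩
  exact ((hT x y).mp (Or.inl hxy')).resolve_right fun hyx => R'.not_T_swap ha hxy' (hsub y x hyx)

lemma T_eq_or_T_eq_conj_of_layoutT_eq (ha : 3 ≤ G.degree a)
    (hT : ∀ b c, R'.layoutT a b c ↔ R.layoutT a b c) :
    R'.T a = R.T a ∨ R'.T a = R.conj.T a := by
  obtain ⟨b, hb⟩ := (G.degree_pos_iff_exists_adj a).mp (by omega : 0 < G.degree a)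
  obtain ⟨c, hbc', -⟩ := R'.succ_exists_unique a b hb
  rcases (hT b c).mp (Or.inl hbc') with hbc | hcb
  · exact Or.inl (T_eq_of_layoutT_eq_of_T ha hT hbc' hbc)
  · refine Or.inr (T_eq_of_layoutT_eq_of_T ha (fun b c => ?_) hbc' hcb)
    rw [layoutT_conj]
    exact hT b c

end

lemma T_eq_of_adj_of_T_eq {R R' : RotationSystem G} {a₁ a₂ : V}
    [Fintype (G.neighborSet a₁)] [Fintype (G.neighborSet a₂)]
    (ha₁ : 3 ≤ G.degree a₁) (ha₂ : 3 ≤ G.degree a₂)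
    (hT : ∀ b c, R'.layoutT a₂ b c ↔ R.layoutT a₂ b c)
    (hQ : ∀ b₁ b₂, R'.layoutQ b₁ a₁ a₂ b₂ ↔ R.layoutQ b₁ a₁ a₂ b₂)
    (hadj : G.Adj a₁ a₂) (h₁ : R'.T a₁ = R.T a₁) : R'.T a₂ = R.T a₂ := by
  obtain ⟨b₁, hb₁, -⟩ := R.pred_exists_unique a₁ a₂ hadj
  obtain ⟨b₂, hb₂, -⟩ := R.succ_exists_unique a₂ a₁ hadj.symm
  rcases (hQ b₁ b₂).mpr (Or.inl ⟨hb₁, hb₂⟩) with ⟨-, hb₂'⟩ | ⟨ha₂b₁', -⟩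
  · exact T_eq_of_layoutT_eq_of_T ha₂ hT hb₂' hb₂
  · exact absurd (h₁ ▸ ha₂b₁') (R.not_T_swap ha₁ hb₁)

lemma eq_of_layout_eq_of_T_eq [G.LocallyFinite] {R R' : RotationSystem G}
    (hconn : G.Connected) (hdeg : ∀ v, 3 ≤ G.degree v)
    (hT : ∀ a b c, R'.layoutT a b c ↔ R.layoutT a b c)
    (hQ : ∀ b₁ a₁ a₂ b₂, R'.layoutQ b₁ a₁ a₂ b₂ ↔ R.layoutQ b₁ a₁ a₂ b₂)
    {v₀ : V} (h₀ : R'.T v₀ = R.T v₀) : R' = R := by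
  refine ext_T (funext fun a => ?_)
  induction (G.reachable_iff_reflTransGen v₀ a).mp (hconn v₀ a) with
  | refl => exact h₀
  | tail _ hadj ih =>
    exact T_eq_of_adj_of_T_eq (hdeg _) (hdeg _) (hT _) (fun b₁ b₂ => hQ b₁ _ _ b₂) hadj ih

end RotationSystem

open RotationSystem in
/-- If two rotation systems on a connected graph of minimum degree at least 3 have the
same associated layout system, then they are equal or conjugate. -/
theorem stmt_11 {V : Type*} [Fintype V] (G : SimpleGraph V) [DecidableRel G.Adj]
    (hconn : G.Connected) (hdeg : ∀ v : V, 3 ≤ G.degree v)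
    (R R' : RotationSystem G)
    (hT : ∀ a b c : V, R'.layoutT a b c ↔ R.layoutT a b c)
    (hQ : ∀ b₁ a₁ a₂ b₂ : V, R'.layoutQ b₁ a₁ a₂ b₂ ↔ R.layoutQ b₁ a₁ a₂ b₂) :
    R' = R ∨ R' = R.conj := by
  obtain ⟨v₀⟩ := hconn.nonempty
  rcases T_eq_or_T_eq_conj_of_layoutT_eq (hdeg v₀) (hT v₀) with h₀ | h₀
  · exact Or.inl (eq_of_layout_eq_of_T_eq hconn hdeg hT hQ h₀)
  · rw [← layoutT_conj R] at hT
    rw [← layoutQ_conj R] at hQ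
    exact Or.inr (eq_of_layout_eq_of_T_eq hconn hdeg hT hQ h₀)
end

section
/- Let G be a connected graph with a rotation system and coordinates C_{ab} as above, and let v be a vertex with extreme-left shortest path P_v from a realizing C_{ab}(v). If u is an inner vertex of P_v with predecessor w on P_v, then C_{ab}(v) is the concatenation of C_{ab}(u) and C_{uw}(v). -/
open scoped Classical

/-- The successor function of the directed cycle of `R` around `x`. -/
noncomputable def RotationSystem.succFn {V : Type*} {G : SimpleGraph V}
    (R : RotationSystem G) (x y : V) : V :=
  if h : y ∈ G.neighborSet x then (R.succ_exists_unique x y h).choose else y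

/-- Local coordinates around `x`: `localIdx x y z` is the position of `z` in the
directed cycle of `R` around `x`, counting from `y = 0`. -/
noncomputable def RotationSystem.localIdx {V : Type*} {G : SimpleGraph V}
    (R : RotationSystem G) (x y z : V) : ℕ :=
  sInf {n : ℕ | (R.succFn x)^[n] y = z}

/-- The coordinate sequence of a walk with respect to a previous vertex `prev`:
at each step it records the local index of the next vertex in the rotation around
the current vertex, relative to the previous vertex. -/
noncomputable def RotationSystem.coordsW {V : Type*} {G : SimpleGraph V}
    (R : RotationSystem G) : (prev : V) → {x y : V} → G.Walk x y → List ℕ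
  | _, _, _, SimpleGraph.Walk.nil => []
  | prev, x, _, @SimpleGraph.Walk.cons _ _ _ v _ _h q =>
      R.localIdx x prev v :: R.coordsW x q

/-- `L` is the coordinate sequence `C_{ab}(v)`: the lexicographically minimal coordinate
sequence over all shortest `a`-`v` paths, with origin pair `(a,b)`. -/
noncomputable def IsLexMinCoord {V : Type*} {G : SimpleGraph V} (R : RotationSystem G)
    (a b v : V) (L : List ℕ) : Prop :=
  (∃ p : G.Walk a v, p.IsPath ∧ p.length = G.dist a v ∧ R.coordsW b p = L) ∧
    ∀ p : G.Walk a v, p.IsPath → p.length = G.dist a v →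
      ¬ List.Lex (· < ·) (R.coordsW b p) L

/-!
Both halves of `P_v` are shortest paths, and the coordinates of `P_v` split as the coordinates
of its `a`-`u` part followed by those of its `u`-`v` part taken relative to `w`. If either half
were not lexicographically minimal, replacing it by the minimal one would give a shortest
`a`-`v` path with smaller coordinates than `C_{ab}(v)`.
-/

theorem List.Lex.append_of_length_eq {α : Type*} {r : α → α → Prop} {l₁ l₂ : List α}
    (s₁ s₂ : List α) (hlen : l₁.length = l₂.length) (h : List.Lex r l₁ l₂) :
    List.Lex r (l₁ ++ s₁) (l₂ ++ s₂) := by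
  induction h with
  | nil => simp at hlen
  | cons _ ih => exact .cons (ih (by simpa using hlen))
  | rel h => exact .rel h

namespace SimpleGraph.Walk

variable {V : Type*} {G : SimpleGraph V} {x y z : V}

theorem length_eq_dist_of_append {p : G.Walk x y} {q : G.Walk y z}
    (h : (p.append q).length = G.dist x z) :
    p.length = G.dist x y ∧ q.length = G.dist y z := by
  have htri : G.dist x z ≤ G.dist x y + G.dist y z := p.reachable.dist_triangle_left z
  have hp : G.dist x y ≤ p.length := dist_le p
  have hq : G.dist y z ≤ q.length := dist_le q
  rw [length_append] at h
  omega

end SimpleGraph.Walk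

namespace RotationSystem

open SimpleGraph

variable {V : Type*} {G : SimpleGraph V} (R : RotationSystem G)

@[simp] theorem coordsW_cons (prev : V) {x y z : V} (h : G.Adj x y) (q : G.Walk y z) :
    R.coordsW prev (Walk.cons h q) = R.localIdx x prev y :: R.coordsW x q := rfl

@[simp] theorem length_coordsW (prev : V) {x y : V} (p : G.Walk x y) :
    (R.coordsW prev p).length = p.length := by
  induction p generalizing prev with
  | nil => rfl
  | cons _ _ ih => simp [ih]

theorem coordsW_isPrefix_append (prev : V) {x y z : V} (p : G.Walk x y) (q : G.Walk y z) :
    R.coordsW prev p <+: R.coordsW prev (p.append q) := by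
  induction p generalizing prev with
  | nil => exact List.nil_prefix
  | cons _ _ ih => simpa using ih _ q

theorem coordsW_concat_append (prev : V) {x y z t : V} (p : G.Walk x y) (h : G.Adj y z)
    (q : G.Walk z t) :
    R.coordsW prev ((p.concat h).append q) = R.coordsW prev (p.concat h) ++ R.coordsW y q := by
  induction p generalizing prev with
  | nil => rfl
  | cons _ _ ih => simp [ih]

end RotationSystem

namespace IsLexMinCoord

open SimpleGraph

variable {V : Type*} {G : SimpleGraph V} {R : RotationSystem G} {a b u v : V}

theorem coordsW_eq_of_not_lt {L : List ℕ} (hL : IsLexMinCoord R a b v L)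
    {p : G.Walk a v} (hp : p.length = G.dist a v)
    (hlt : ¬ List.Lex (· < ·) L (R.coordsW b p)) : R.coordsW b p = L :=
  Std.Trichotomous.trichotomous (r := List.Lex (· < ·)) _ _
    (hL.2 p (p.isPath_of_length_eq_dist hp) hp) hlt

theorem coordsW_left_eq {L Lu : List ℕ} (hL : IsLexMinCoord R a b v L)
    (hLu : IsLexMinCoord R a b u Lu) {p : G.Walk a u} {q : G.Walk u v}
    (hlen : (p.append q).length = G.dist a v) (hcoords : R.coordsW b (p.append q) = L) :
    R.coordsW b p = Lu := by
  obtain ⟨hp, hq⟩ := Walk.length_eq_dist_of_append hlen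
  refine hLu.coordsW_eq_of_not_lt hp fun hlt => ?_
  obtain ⟨p', -, hp', rfl⟩ := hLu.1
  have hlen' : (p'.append q).length = G.dist a v := by
    rw [Walk.length_append, hp', ← hp, ← Walk.length_append, hlen]
  obtain ⟨s', hs'⟩ := R.coordsW_isPrefix_append b p' q
  obtain ⟨s, hs⟩ := R.coordsW_isPrefix_append b p q
  refine hL.2 _ (Walk.isPath_of_length_eq_dist _ hlen') hlen' ?_
  rw [← hcoords, ← hs, ← hs']
  exact hlt.append_of_length_eq _ _ (by simp [hp, hp'])

theorem coordsW_right_eq {w : V} {L Luw : List ℕ}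
    (hL : IsLexMinCoord R a b v L) (hLuw : IsLexMinCoord R u w v Luw) {p : G.Walk a w}
    {h : G.Adj w u} {q : G.Walk u v} (hlen : ((p.concat h).append q).length = G.dist a v)
    (hcoords : R.coordsW b ((p.concat h).append q) = L) :
    R.coordsW w q = Luw := by
  obtain ⟨hp, hq⟩ := Walk.length_eq_dist_of_append hlen
  refine hLuw.coordsW_eq_of_not_lt hq fun hlt => ?_
  obtain ⟨q', -, hq', rfl⟩ := hLuw.1
  have hlen' : ((p.concat h).append q').length = G.dist a v := by
    rw [Walk.length_append, hq', ← hq, ← Walk.length_append, hlen]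
  refine hL.2 _ (Walk.isPath_of_length_eq_dist _ hlen') hlen' ?_
  rw [← hcoords, R.coordsW_concat_append, R.coordsW_concat_append]
  exact hlt.append_left _ _

end IsLexMinCoord

theorem stmt_13_general {V : Type*} (G : SimpleGraph V)
    (R : RotationSystem G) (a b v u w : V)
    (Lv Lu Luw : List ℕ)
    (hLv : IsLexMinCoord R a b v Lv)
    (hLu : IsLexMinCoord R a b u Lu)
    (hLuw : IsLexMinCoord R u w v Luw)
    -- the extreme-left shortest path `P_v` realizing `C_{ab}(v) = Lv`,
    -- decomposed at the inner vertex `u` and its predecessor `w`: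
    (P₁ : G.Walk a w) (hwu : G.Adj w u) (P₂ : G.Walk u v)
    (hPlen : (P₁.append (SimpleGraph.Walk.cons hwu P₂)).length = G.dist a v)
    (hPcoords : R.coordsW b (P₁.append (SimpleGraph.Walk.cons hwu P₂)) = Lv) :
    Lv = Lu ++ Luw := by
  rw [← SimpleGraph.Walk.concat_append] at hPlen hPcoords
  rw [← hLv.coordsW_left_eq hLu hPlen hPcoords, ← hLv.coordsW_right_eq hLuw hPlen hPcoords,
    ← hPcoords, R.coordsW_concat_append]

/-- If `u` is an inner vertex of the extreme-left shortest path `P_v` realizing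
`C_{ab}(v)`, with predecessor `w` on `P_v`, then `C_{ab}(v)` is the concatenation of
`C_{ab}(u)` and `C_{uw}(v)`. -/
theorem stmt_13 {V : Type*} [Fintype V] (G : SimpleGraph V) [DecidableRel G.Adj]
    (hconn : G.Connected) (hdeg : ∀ x : V, 3 ≤ G.degree x)
    (R : RotationSystem G) (a b v u w : V) (hab : G.Adj a b)
    (Lv Lu Luw : List ℕ)
    (hLv : IsLexMinCoord R a b v Lv)
    (hLu : IsLexMinCoord R a b u Lu)
    (hLuw : IsLexMinCoord R u w v Luw)
    -- the extreme-left shortest path `P_v` realizing `C_{ab}(v) = Lv`,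
    -- decomposed at the inner vertex `u` and its predecessor `w`:
    (P₁ : G.Walk a w) (hwu : G.Adj w u) (P₂ : G.Walk u v) (huv : u ≠ v)
    (hPpath : (P₁.append (SimpleGraph.Walk.cons hwu P₂)).IsPath)
    (hPlen : (P₁.append (SimpleGraph.Walk.cons hwu P₂)).length = G.dist a v)
    (hPcoords : R.coordsW b (P₁.append (SimpleGraph.Walk.cons hwu P₂)) = Lv) :
    Lv = Lu ++ Luw :=
  stmt_13_general G R a b v u w Lv Lu Luw hLv hLu hLuw P₁ hwu P₂ hPlen hPcoords
end
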